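/- arXiv:2602.11222 — 2 statements merged into one kernel-verified Lean document; each statement's English description precedes it below -/
import Mathlib

section
/- For every real number x with 0 ≤ x ≤ 2π, the Clausen function of order 2 satisfies ∑_{k=1}^∞ sin(kx)/k² = −∫_0^x log(2 sin(t/2)) dt, where the integral is a convergent improper (Lebesgue) integral. -/
/-!
For `|r| < 1` the real part of `-log (1 - r e^{it})` gives
`∑ rⁿ cos (nt) / n = -log ‖1 - r e^{it}‖`, and integrating termwise over `[0, x]` gives
`∑ rⁿ sin (nx) / n² = -∫₀ˣ log ‖1 - r e^{it}‖ dt`. Let `r → 1⁻`. The left side tends to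
`Cl₂(x)` by Abel's limit theorem. The right side tends to `-∫₀ˣ log ‖1 - e^{it}‖ dt` by dominated
convergence: on the unit circle `‖1 - rw‖² = (1 - r)² + r ‖1 - w‖²`, so for `r ≥ 1/2` the
integrand is squeezed between `log ‖1 - w‖ - log 2` and `log 2`. Finally
`‖1 - e^{it}‖ = |2 sin (t/2)|`, an analytic function, so its logarithm is integrable.
-/

open Real MeasureTheory intervalIntegral Filter Topology

open Complex in
theorem norm_one_sub_ofReal_mul_sq {w : ℂ} (hw : ‖w‖ = 1) (r : ℝ) :
    ‖1 - r * w‖ ^ 2 = (1 - r) ^ 2 + r * ‖1 - w‖ ^ 2 := by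
  have hw2 : w.re * w.re + w.im * w.im = 1 := by
    rw [← normSq_apply, normSq_eq_norm_sq, hw, one_pow]
  simp only [← normSq_eq_norm_sq, normSq_apply, sub_re, one_re, mul_re, ofReal_re, ofReal_im,
    zero_mul, sub_zero, sub_im, one_im, mul_im, add_zero, zero_sub, mul_neg, neg_mul, neg_neg]
  linear_combination (r ^ 2 - r) * hw2

theorem abs_log_norm_one_sub_ofReal_mul_le {w : ℂ} (hw : ‖w‖ = 1) (hw1 : w ≠ 1) {r : ℝ}
    (hr : r ∈ Set.Icc (1 / 2 : ℝ) 1) :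
    |log ‖1 - r * w‖| ≤ |log ‖1 - w‖| + log 2 := by
  have hr0 : 0 ≤ r := by linarith [hr.1]
  have hpos : 0 < ‖1 - w‖ := norm_pos_iff.2 (sub_ne_zero.2 hw1.symm)
  have hlower : ‖1 - w‖ ^ 2 / 2 ≤ ‖1 - r * w‖ ^ 2 := by
    nlinarith [norm_one_sub_ofReal_mul_sq hw r, hr.1]
  have hupper : ‖1 - r * w‖ ≤ 2 :=
    calc ‖1 - r * w‖ ≤ ‖(1 : ℂ)‖ + ‖(r : ℂ) * w‖ := norm_sub_le _ _
      _ = 1 + r := by rw [norm_one, norm_mul, hw, mul_one, Complex.norm_real, norm_of_nonneg hr0]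
      _ ≤ 2 := by linarith [hr.2]
  have hpos' : 0 < ‖1 - r * w‖ := by nlinarith [norm_nonneg (1 - r * w)]
  have hlog_upper : log ‖1 - r * w‖ ≤ log 2 := log_le_log hpos' hupper
  have hlog_lower : 2 * log ‖1 - w‖ - log 2 ≤ 2 * log ‖1 - r * w‖ := by
    have := log_le_log (by positivity) hlower
    rwa [log_div (by positivity) two_ne_zero, log_pow, log_pow] at this
  have hlog2 : 0 ≤ log 2 := log_nonneg one_le_two
  rw [abs_le]
  constructor <;> linarith [neg_abs_le (log ‖1 - w‖), le_abs_self (log ‖1 - w‖)]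

open Complex in
theorem hasSum_pow_mul_cos_div {r : ℝ} (hr : |r| < 1) (t : ℝ) :
    HasSum (fun n : ℕ => r ^ n * Real.cos (n * t) / n) (-Real.log ‖1 - r * exp (t * I)‖) := by
  have hz : ‖(r : ℂ) * exp (t * I)‖ < 1 := by simpa using hr
  convert hasSum_re (hasSum_taylorSeries_neg_log hz) using 1
  · ext n
    have : (n : ℂ) * (t * I) = ((n * t : ℝ) : ℂ) * I := by push_cast; ring
    rw [mul_pow, ← Complex.exp_nat_mul, this, ← ofReal_pow, ← ofReal_natCast, div_ofReal_re,
      re_ofReal_mul, exp_ofReal_mul_I_re]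
  · simp [log_re]

theorem integral_cos_nat_mul_div (n : ℕ) (x : ℝ) :
    ∫ t in (0 : ℝ)..x, Real.cos (n * t) / n = Real.sin (n * x) / n ^ 2 := by
  rcases eq_or_ne n 0 with rfl | hn
  · simp
  · rw [intervalIntegral.integral_div, intervalIntegral.integral_comp_mul_left _ (by simpa),
      integral_cos, mul_zero, sin_zero, sub_zero, smul_eq_mul]
    ring

open Complex in
theorem hasSum_pow_mul_sin_div_sq {r : ℝ} (hr : |r| < 1) (x : ℝ) :
    HasSum (fun n : ℕ => r ^ n * Real.sin (n * x) / n ^ 2)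
      (-∫ t in (0 : ℝ)..x, Real.log ‖1 - r * exp (t * I)‖) := by
  have hbound (n : ℕ) (t : ℝ) : ‖r ^ n * Real.cos (n * t) / n‖ ≤ |r| ^ n := by
    rw [norm_div, norm_mul, norm_pow, Real.norm_natCast, Real.norm_eq_abs]
    rcases eq_or_ne n 0 with rfl | hn
    · simp
    · calc |r| ^ n * ‖Real.cos (n * t)‖ / n ≤ |r| ^ n * 1 / 1 := by
            gcongr
            · exact abs_cos_le_one _
            · exact_mod_cast Nat.one_le_iff_ne_zero.2 hn
        _ = |r| ^ n := by ring
  have hsum := intervalIntegral.hasSum_integral_of_dominated_convergence (μ := volume)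
    (a := 0) (b := x) (F := fun (n : ℕ) t => r ^ n * Real.cos (n * t) / n) (fun n _ => |r| ^ n)
    (fun n => by fun_prop) (fun n => .of_forall fun t _ => hbound n t)
    (.of_forall fun _ _ => summable_geometric_of_lt_one (abs_nonneg r) hr)
    intervalIntegrable_const (.of_forall fun t _ => hasSum_pow_mul_cos_div hr t)
  simpa only [mul_div_assoc, intervalIntegral.integral_const_mul, integral_cos_nat_mul_div,
    intervalIntegral.integral_neg] using hsum

theorem summable_sin_nat_mul_div_sq (x : ℝ) :
    Summable fun n : ℕ => Real.sin (n * x) / n ^ 2 := by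
  refine (summable_one_div_nat_pow.2 one_lt_two).of_norm_bounded fun n => ?_
  rw [norm_div, norm_pow, Real.norm_natCast]
  gcongr
  exact abs_sin_le_one _

-- No sign condition on `sin (t / 2)` is needed since `Real.log |y| = Real.log y`.
open Complex in
theorem log_norm_one_sub_exp_mul_I (t : ℝ) :
    Real.log ‖1 - exp (t * I)‖ = Real.log (2 * Real.sin (t / 2)) := by
  rw [norm_sub_rev, mul_comm, norm_exp_I_mul_ofReal_sub_one, Real.norm_eq_abs, log_abs]

theorem intervalIntegrable_log_two_mul_sin_half (a b : ℝ) :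
    IntervalIntegrable (fun t => Real.log (2 * Real.sin (t / 2))) volume a b := by
  have : AnalyticOnNhd ℝ (fun t => 2 * Real.sin (t / 2)) (Set.uIcc a b) :=
    fun _ _ => by fun_prop
  exact this.meromorphicOn.intervalIntegrable_log

open Complex in
theorem ae_exp_mul_I_ne_one : ∀ᵐ t : ℝ, exp (t * I) ≠ 1 := by
  have hsub : {t : ℝ | exp (t * I) = 1} ⊆ Set.range fun n : ℤ => n * (2 * π) := by
    intro t ht
    obtain ⟨n, hn⟩ := Complex.exp_eq_one_iff.1 ht
    exact ⟨n, by simpa using (congrArg Complex.im hn).symm⟩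
  exact ((Set.countable_range _).mono hsub).ae_notMem volume

open Complex in
theorem tendsto_integral_log_norm_one_sub_ofReal_mul (x : ℝ) :
    Tendsto (fun r : ℝ => ∫ t in (0 : ℝ)..x, Real.log ‖1 - r * exp (t * I)‖) (𝓝[<] 1)
      (𝓝 (∫ t in (0 : ℝ)..x, Real.log ‖1 - exp (t * I)‖)) := by
  have hint : IntervalIntegrable (fun t : ℝ => Real.log ‖1 - exp (t * I)‖) volume 0 x := by
    simpa only [log_norm_one_sub_exp_mul_I] using intervalIntegrable_log_two_mul_sin_half 0 x
  have hnear : ∀ᶠ r in 𝓝[<] (1 : ℝ), r ∈ Set.Icc (1 / 2 : ℝ) 1 :=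
    Icc_mem_nhdsLT (by norm_num)
  refine tendsto_integral_filter_of_dominated_convergence
    (fun t => |Real.log ‖1 - exp (t * I)‖| + Real.log 2)
    (.of_forall fun r => (by fun_prop : Measurable _).aestronglyMeasurable) ?_
    (hint.abs.add intervalIntegrable_const) ?_
  · filter_upwards [hnear] with r hr
    filter_upwards [ae_exp_mul_I_ne_one] with t ht _
    exact abs_log_norm_one_sub_ofReal_mul_le (norm_exp_ofReal_mul_I t) ht hr
  · filter_upwards [ae_exp_mul_I_ne_one] with t ht _
    have hne : ‖1 - exp (t * I)‖ ≠ 0 := norm_ne_zero_iff.2 (sub_ne_zero.2 ht.symm)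
    have hcont : ContinuousAt (fun r : ℝ => Real.log ‖1 - r * exp (t * I)‖) 1 :=
      ContinuousAt.log (by fun_prop) (by simpa using hne)
    simpa using hcont.tendsto.mono_left nhdsWithin_le_nhds

theorem clausen_two_eq_neg_integral_log_two_sin_half_general
    (x : ℝ) :
    IntervalIntegrable (fun t : ℝ => Real.log (2 * Real.sin (t / 2)))
        MeasureTheory.volume 0 x ∧
    HasSum (fun k : ℕ => Real.sin (((k : ℝ) + 1) * x) / ((k : ℝ) + 1) ^ 2)
      (-∫ t in (0 : ℝ)..x, Real.log (2 * Real.sin (t / 2))) := by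
  refine ⟨intervalIntegrable_log_two_mul_sin_half 0 x, ?_⟩
  have hsum := (summable_sin_nat_mul_div_sq x).hasSum
  have habel := Real.tendsto_tsum_powerSeries_nhdsWithin_lt hsum.tendsto_sum_nat
  have habel_eq : ∀ᶠ r in 𝓝[<] (1 : ℝ),
      ∑' n : ℕ, Real.sin (n * x) / n ^ 2 * r ^ n =
        -∫ t in (0 : ℝ)..x, Real.log ‖1 - r * Complex.exp (t * Complex.I)‖ := by
    filter_upwards [Ioo_mem_nhdsLT (show (-1 : ℝ) < 1 by norm_num)] with r hr
    rw [← (hasSum_pow_mul_sin_div_sq (abs_lt.2 hr) x).tsum_eq]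
    exact tsum_congr fun n => by ring
  have hval := tendsto_nhds_unique (habel.congr' habel_eq)
    (tendsto_integral_log_norm_one_sub_ofReal_mul x).neg
  simp only [log_norm_one_sub_exp_mul_I] at hval
  rw [← hval]
  simpa using (hasSum_nat_add_iff' 1).2 hsum

/-- For every real `x` with `0 ≤ x ≤ 2π`, the kernel `log (2 sin (t/2))` is
(improperly Lebesgue-)integrable on `(0, x)` and the Clausen function of order 2
satisfies `∑_{k=1}^∞ sin(kx)/k² = -∫_0^x log (2 sin (t/2)) dt`. -/
theorem clausen_two_eq_neg_integral_log_two_sin_half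
    (x : ℝ) (hx0 : 0 ≤ x) (hx1 : x ≤ 2 * Real.pi) :
    IntervalIntegrable (fun t : ℝ => Real.log (2 * Real.sin (t / 2)))
        MeasureTheory.volume 0 x ∧
    HasSum (fun k : ℕ => Real.sin (((k : ℝ) + 1) * x) / ((k : ℝ) + 1) ^ 2)
      (-∫ t in (0 : ℝ)..x, Real.log (2 * Real.sin (t / 2))) :=
  clausen_two_eq_neg_integral_log_two_sin_half_general x
end

section
/- For every real number x with 0 < x < 2π, the function Cl₂(x) = ∑_{k=1}^∞ sin(kx)/k² is differentiable at x with derivative Cl₂′(x) = −log(2 sin(x/2)). -/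
/-!
Differentiate termwise. The derived series is `∑ cos (k y) / k`; since
`2 sin (y/2) ∑_{k ≤ n} cos (k y)` telescopes, its partial sums are bounded by `1 / sin (y/2)`,
so Abel summation makes it converge uniformly on compact subsets of `(0, 2π)`. Its sum is
identified by Abel's limit theorem: for `r < 1` it is `-Re log (1 - r e^{iy})`, which tends to
`-log |1 - e^{iy}| = -log (2 sin (y/2))` as `r → 1⁻`.
-/

open Real Filter Finset Topology

section Dirichlet

variable {E : Type*} [NormedAddCommGroup E] [NormedSpace ℝ E] {f : ℕ → ℝ} {b : ℝ}

theorem norm_sum_Ico_smul_le_of_antitone {z : ℕ → E} (hfa : Antitone f) (hf0 : ∀ i, 0 ≤ f i)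
    (hzb : ∀ n, ‖∑ i ∈ range n, z i‖ ≤ b) {m n : ℕ} (hmn : m ≤ n) :
    ‖∑ i ∈ Ico m n, f i • z i‖ ≤ 2 * b * f m := by
  have hb : 0 ≤ b := by simpa using hzb 0
  rcases hmn.eq_or_lt with rfl | hmn
  · simpa using mul_nonneg (mul_nonneg zero_le_two hb) (hf0 m)
  have hZ : ∀ c : ℝ, 0 ≤ c → ∀ k, ‖c • ∑ i ∈ range k, z i‖ ≤ c * b := fun c hc k => by
    rw [norm_smul, Real.norm_of_nonneg hc]
    exact mul_le_mul_of_nonneg_left (hzb k) hc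
  have htelescope : ∑ i ∈ Ico m (n - 1), (f i - f (i + 1)) = f m - f (n - 1) := by
    rw [← neg_sub, ← sum_Ico_sub f (by omega : m ≤ n - 1), ← sum_neg_distrib]
    simp only [neg_sub]
  have hinner : ‖∑ i ∈ Ico m (n - 1), (f (i + 1) - f i) • ∑ j ∈ range (i + 1), z j‖
      ≤ (f m - f (n - 1)) * b := by
    rw [← htelescope, sum_mul]
    refine (norm_sum_le _ _).trans (sum_le_sum fun i _ => ?_)
    rw [← norm_neg, ← neg_smul, neg_sub]
    exact hZ _ (sub_nonneg.mpr (hfa i.le_succ)) _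
  rw [sum_Ico_by_parts f z hmn]
  calc _ ≤ f (n - 1) * b + f m * b + (f m - f (n - 1)) * b :=
        norm_sub_le_of_le (norm_sub_le_of_le (hZ _ (hf0 _) n) (hZ _ (hf0 _) m)) hinner
    _ = 2 * b * f m := by ring

theorem Antitone.uniformCauchySeqOn_series_smul_of_tendsto_zero_of_bounded {α : Type*}
    {z : ℕ → α → E} {s : Set α} (hfa : Antitone f) (hf0 : Tendsto f atTop (𝓝 0))
    (hzb : ∀ y ∈ s, ∀ n, ‖∑ i ∈ range n, z i y‖ ≤ b) :
    UniformCauchySeqOn (fun n y => ∑ i ∈ range n, f i • z i y) atTop s := by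
  have hf_nonneg : ∀ i, 0 ≤ f i := hfa.le_of_tendsto hf0
  have hdist : ∀ y ∈ s, ∀ m n, m ≤ n →
      dist (∑ i ∈ range m, f i • z i y) (∑ i ∈ range n, f i • z i y) ≤ 2 * b * f m := by
    intro y hy m n hmn
    rw [dist_comm, dist_eq_norm, ← sum_Ico_eq_sub _ hmn]
    exact norm_sum_Ico_smul_le_of_antitone hfa hf_nonneg (hzb y hy) hmn
  rw [Metric.uniformCauchySeqOn_iff]
  intro ε hε
  have hsmall : Tendsto (fun i => 2 * b * f i) atTop (𝓝 0) := by simpa using hf0.const_mul (2 * b)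
  obtain ⟨N, hN⟩ := eventually_atTop.mp (hsmall.eventually (gt_mem_nhds hε))
  refine ⟨N, fun m hm n hn y hy => ?_⟩
  rcases le_total m n with hmn | hnm
  · exact (hdist y hy m n hmn).trans_lt (hN m hm)
  · rw [dist_comm]
    exact (hdist y hy n m hnm).trans_lt (hN n hn)

end Dirichlet

theorem two_mul_sin_half_mul_sum_range_cos (y : ℝ) (n : ℕ) :
    2 * sin (y / 2) * ∑ k ∈ range n, cos ((k + 1) * y) = sin ((n + 1 / 2) * y) - sin (y / 2) := by
  have hterm : ∀ k : ℕ, 2 * sin (y / 2) * cos ((k + 1) * y)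
      = sin (((k + 1 : ℕ) + 1 / 2) * y) - sin ((k + 1 / 2) * y) := fun k => by
    rw [two_mul_sin_mul_cos, show y / 2 - (k + 1) * y = -((k + 1 / 2) * y) by ring, sin_neg]
    push_cast
    ring_nf
  rw [mul_sum, sum_congr rfl fun k _ => hterm k, sum_range_sub (fun k : ℕ => sin ((k + 1 / 2) * y))]
  norm_num [div_eq_inv_mul]

theorem abs_sum_range_cos_le {y : ℝ} (hy : sin (y / 2) ≠ 0) (n : ℕ) :
    |∑ k ∈ range n, cos ((k + 1) * y)| ≤ |sin (y / 2)|⁻¹ := by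
  have h := congrArg abs (two_mul_sin_half_mul_sum_range_cos y n)
  rw [abs_mul, abs_mul, abs_two] at h
  have : |sin ((n + 1 / 2) * y) - sin (y / 2)| ≤ 2 :=
    (abs_sub _ _).trans (by linarith [abs_sin_le_one ((n + 1 / 2) * y), abs_sin_le_one (y / 2)])
  rw [← one_div, le_div_iff₀ (abs_pos.mpr hy)]
  linarith

theorem exists_pos_le_sin_half_of_isCompact {K : Set ℝ} (hK : IsCompact K)
    (hKs : K ⊆ Set.Ioo 0 (2 * π)) : ∃ c, 0 < c ∧ ∀ y ∈ K, c ≤ sin (y / 2) :=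
  hK.exists_forall_le' (by fun_prop) fun y hy =>
    sin_pos_of_pos_of_lt_pi (by linarith [(hKs hy).1]) (by linarith [(hKs hy).2])

theorem uniformCauchySeqOn_sum_range_cos_div {K : Set ℝ} (hK : IsCompact K)
    (hKs : K ⊆ Set.Ioo 0 (2 * π)) :
    UniformCauchySeqOn (fun n y => ∑ k ∈ range n, cos ((k + 1) * y) / (k + 1)) atTop K := by
  obtain ⟨c, hc, hcK⟩ := exists_pos_le_sin_half_of_isCompact hK hKs
  have hbound : ∀ y ∈ K, ∀ n, ‖∑ k ∈ range n, cos ((k + 1) * y)‖ ≤ c⁻¹ := fun y hy n => by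
    have hsin : c ≤ |sin (y / 2)| := (hcK y hy).trans (le_abs_self _)
    exact (abs_sum_range_cos_le (hc.trans_le (hcK y hy)).ne' n).trans (inv_anti₀ hc hsin)
  have hanti : Antitone fun k : ℕ => 1 / ((k : ℝ) + 1) := fun i j hij => by
    dsimp only
    gcongr
  simpa only [smul_eq_mul, one_div_mul_eq_div] using
    hanti.uniformCauchySeqOn_series_smul_of_tendsto_zero_of_bounded
      tendsto_one_div_add_atTop_nhds_zero_nat hbound

theorem hasSum_cos_nat_mul_div_mul_pow (y : ℝ) {r : ℝ} (hr : |r| < 1) :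
    HasSum (fun k : ℕ => cos (k * y) / k * r ^ k)
      (-Complex.log (1 - r * Complex.exp (y * Complex.I))).re := by
  have hnorm : ‖(r : ℂ) * Complex.exp (y * Complex.I)‖ < 1 := by
    simpa [Complex.norm_exp_ofReal_mul_I] using hr
  convert Complex.hasSum_re (Complex.hasSum_taylorSeries_neg_log hnorm) using 2 with k
  rw [mul_pow, ← Complex.exp_nat_mul, ← mul_assoc]
  norm_cast
  rw [mul_div_right_comm, ← Complex.ofReal_natCast, ← Complex.ofReal_div, Complex.re_ofReal_mul,
    Complex.exp_ofReal_mul_I_re]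
  ring

theorem tendsto_sum_range_cos_div {y : ℝ} (hy0 : 0 < y) (hy1 : y < 2 * π) :
    Tendsto (fun n => ∑ k ∈ range n, cos ((k + 1) * y) / (k + 1)) atTop
      (𝓝 (-log (2 * sin (y / 2)))) := by
  have hyK : ({y} : Set ℝ) ⊆ Set.Ioo 0 (2 * π) := Set.singleton_subset_iff.mpr ⟨hy0, hy1⟩
  obtain ⟨l, hl⟩ := cauchySeq_tendsto_of_complete
    ((uniformCauchySeqOn_sum_range_cos_div isCompact_singleton hyK).cauchySeq rfl)
  -- the `k = 0` term is `cos 0 / 0 = 0`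
  have hl' : Tendsto (fun n => ∑ k ∈ range n, cos (k * y) / k) atTop (𝓝 l) := by
    rw [← tendsto_add_atTop_iff_nat 1]
    simpa [sum_range_succ'] using hl
  set e := Complex.exp (y * Complex.I)
  have hcos : cos y < 1 :=
    (cos_le_one y).lt_of_ne fun h => hy0.ne' ((cos_eq_one_iff_of_lt_of_lt (by linarith) hy1).mp h)
  have hslit : 1 - e ∈ Complex.slitPlane :=
    Complex.mem_slitPlane_iff.mpr (Or.inl (by simpa [e, Complex.exp_ofReal_mul_I_re] using hcos))
  have hcont : ContinuousAt (fun r : ℝ => (-Complex.log (1 - r * e)).re) 1 := by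
    have : ContinuousAt (fun r : ℝ => 1 - (r : ℂ) * e) 1 := by fun_prop
    exact Complex.continuous_re.continuousAt.comp (this.clog (by simpa using hslit)).neg
  have hvalue : (-Complex.log (1 - e)).re = -log (2 * sin (y / 2)) := by
    have hsin : 0 < sin (y / 2) := sin_pos_of_pos_of_lt_pi (by linarith) (by linarith)
    rw [Complex.neg_re, Complex.log_re, norm_sub_rev,
      show e = Complex.exp (Complex.I * y) by rw [mul_comm], Complex.norm_exp_I_mul_ofReal_sub_one,
      Real.norm_of_nonneg (by positivity)]
  have habel : Tendsto (fun r : ℝ => ∑' k : ℕ, cos (k * y) / k * r ^ k) (𝓝[<] 1)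
      (𝓝 (-log (2 * sin (y / 2)))) := by
    have hlim := hcont.tendsto
    simp only [Complex.ofReal_one, one_mul, hvalue] at hlim
    refine (hlim.mono_left nhdsWithin_le_nhds).congr' ?_
    filter_upwards [Ioo_mem_nhdsLT (show (-1 : ℝ) < 1 by norm_num)] with r hr
    exact ((hasSum_cos_nat_mul_div_mul_pow y (abs_lt.mpr hr)).tsum_eq).symm
  rwa [tendsto_nhds_unique (Real.tendsto_tsum_powerSeries_nhdsWithin_lt hl') habel] at hl

theorem tendstoLocallyUniformlyOn_sum_range_cos_div :
    TendstoLocallyUniformlyOn (fun n y => ∑ k ∈ range n, cos ((k + 1) * y) / (k + 1))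
      (fun y => -log (2 * sin (y / 2))) atTop (Set.Ioo 0 (2 * π)) :=
  (tendstoLocallyUniformlyOn_iff_forall_isCompact isOpen_Ioo).mpr fun _K hKs hK =>
    (uniformCauchySeqOn_sum_range_cos_div hK hKs).tendstoUniformlyOn_of_tendsto fun _y hy =>
      tendsto_sum_range_cos_div (hKs hy).1 (hKs hy).2

theorem hasDerivAt_sin_mul_div_sq {c : ℝ} (hc : c ≠ 0) (y : ℝ) :
    HasDerivAt (fun t => sin (c * t) / c ^ 2) (cos (c * y) / c) y := by
  refine (((hasDerivAt_id' y).const_mul c).sin.div_const (c ^ 2)).congr_deriv ?_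
  field_simp

theorem summable_sin_mul_div_sq (y : ℝ) :
    Summable fun k : ℕ => sin ((k + 1) * y) / ((k : ℝ) + 1) ^ 2 := by
  have hsq : Summable fun k : ℕ => 1 / ((k : ℝ) + 1) ^ 2 := by
    exact_mod_cast (summable_nat_add_iff 1).mpr (Real.summable_one_div_nat_pow.mpr one_lt_two)
  refine hsq.of_norm_bounded fun k => ?_
  rw [norm_div, norm_pow, Real.norm_of_nonneg (by positivity : (0 : ℝ) ≤ k + 1)]
  exact div_le_div_of_nonneg_right (abs_sin_le_one _) (by positivity)

/-- For every real `x` with `0 < x < 2π`, the Clausen function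
`Cl₂(x) = ∑_{k=1}^∞ sin(kx)/k²` is differentiable at `x` with derivative
`-log (2 sin (x/2))`. -/
theorem clausen_two_hasDerivAt
    (x : ℝ) (hx0 : 0 < x) (hx1 : x < 2 * Real.pi) :
    HasDerivAt
      (fun y : ℝ => ∑' k : ℕ, Real.sin (((k : ℝ) + 1) * y) / ((k : ℝ) + 1) ^ 2)
      (-Real.log (2 * Real.sin (x / 2))) x := by
  have hpartial : ∀ n : ℕ, ∀ y : ℝ, HasDerivAt
      (fun t => ∑ k ∈ range n, sin ((k + 1) * t) / ((k : ℝ) + 1) ^ 2)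
      (∑ k ∈ range n, cos ((k + 1) * y) / (k + 1)) y := fun n y =>
    HasDerivAt.fun_sum fun k _ => hasDerivAt_sin_mul_div_sq (by positivity) y
  exact hasDerivAt_of_tendstoLocallyUniformlyOn isOpen_Ioo
    tendstoLocallyUniformlyOn_sum_range_cos_div (Eventually.of_forall fun n y _ => hpartial n y)
    (fun y _ => (summable_sin_mul_div_sq y).hasSum.tendsto_sum_nat) ⟨hx0, hx1⟩
end
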